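/- (Hoggatt–Long) For all positive integers m and n: m divides n if and only if the Lucas polynomial {m} divides {n} in Z[s,t]. Moreover, when m divides n, the quotient {n}/{m} is a polynomial in s and t all of whose coefficients are nonnegative integers. -/

import Mathlib

open MvPolynomial Finset

noncomputable section

/-- Polynomial ring ℤ[s,t] with s = X 0, t = X 1. -/
abbrev P2 : Type := MvPolynomial (Fin 2) ℤ

def ps : P2 := X 0
def pt : P2 := X 1

/-- The Lucas sequence of polynomials: {0}=0, {1}=1, {n}=s{n-1}+t{n-2}. -/
def lucas : ℕ → P2
  | 0 => 0
  | 1 => 1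
  | (n+2) => ps * lucas (n+1) + pt * lucas n

/-- The Lucastorial {n}! = {1}{2}⋯{n}. -/
def lucasFact (n : ℕ) : P2 := ∏ i ∈ Finset.range n, lucas (i+1)

/-- The d-divisible Lucastorial {n:d}! = {d}{2d}⋯{nd}. -/
def lucasFactD (d n : ℕ) : P2 := ∏ i ∈ Finset.range n, lucas (d*(i+1))

/-- A polynomial lies in ℕ[s,t]: all coefficients are nonnegative. -/
def Nonneg (p : P2) : Prop := ∀ m, 0 ≤ p.coeff m

/-- The fraction field ℤ(s,t). -/
abbrev K : Type := FractionRing P2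

def φ : P2 →+* K := algebraMap P2 K

def L (n : ℕ) : K := φ (lucas n)

def LFact (n : ℕ) : K := φ (lucasFact n)

def LFactD (d n : ℕ) : K := φ (lucasFactD d n)

/-- The Lucasnomial {n choose k}, as an element of the fraction field. -/
def lnom (n k : ℕ) : K := LFact n / (LFact k * LFact (n-k))

/-- The d-divisible Lucasnomial {n:d choose k:d}, as an element of the fraction field. -/
def lnomD (d n k : ℕ) : K := LFactD d n / (LFactD d k * LFactD d (n-k))

/-- The Lucas-Catalan number C_{n} = (1/{n+1}) {2n choose n}. -/
def catL (n : ℕ) : K := lnom (2*n) n / L (n+1)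

/-- The Lucas-Fuss-Catalan number C_{n,k} = (1/{kn+1}) {(k+1)n choose n}. -/
def fussCatL (n k : ℕ) : K := lnom ((k+1)*n) n / L (k*n+1)


/-!
The addition formula `{a+b+1} = {a+1}{b+1} + t{a}{b}` turns `{mk} = q{m}` into
`{m(k+1)} = ({mk+1} + t q {m-1}){m}`, so by induction on `k` the quotient `{mk}/{m}` is built
from `t` and Lucas polynomials by sums and products, and has nonnegative coefficients.
For the converse, specialize `s = 2a`, `t = -1` (with `a > 1`): the Lucas polynomials become the
`y`-sequence of the Pell equation `x² - (a² - 1)y² = 1`, for which `y_m ∣ y_n ↔ m ∣ n`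
(`Pell.y_dvd_iff`).
-/

theorem lucas_add_two (n : ℕ) : lucas (n + 2) = ps * lucas (n + 1) + pt * lucas n := rfl

theorem nonneg_add {p q : P2} (hp : Nonneg p) (hq : Nonneg q) : Nonneg (p + q) :=
  fun m => by rw [coeff_add]; exact add_nonneg (hp m) (hq m)

theorem nonneg_mul {p q : P2} (hp : Nonneg p) (hq : Nonneg q) : Nonneg (p * q) :=
  fun m => by rw [coeff_mul]; exact sum_nonneg fun _ _ => mul_nonneg (hp _) (hq _)

theorem nonneg_zero : Nonneg 0 := fun m => by simp

theorem nonneg_one : Nonneg 1 := fun m => by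
  rw [coeff_one]; split_ifs <;> norm_num

theorem nonneg_X (i : Fin 2) : Nonneg (X i) := fun m => by
  classical
  rw [coeff_X]; split_ifs <;> norm_num

theorem nonneg_lucas : ∀ n, Nonneg (lucas n)
  | 0 => nonneg_zero
  | 1 => nonneg_one
  | n + 2 => by
    rw [lucas_add_two]
    exact nonneg_add (nonneg_mul (nonneg_X 0) (nonneg_lucas (n + 1)))
      (nonneg_mul (nonneg_X 1) (nonneg_lucas n))

theorem lucas_add_add_one :
    ∀ a b : ℕ, lucas (a + b + 1) = lucas (a + 1) * lucas (b + 1) + pt * lucas a * lucas b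
  | 0, b => by simp [lucas]
  | 1, b => by
    rw [show 1 + b + 1 = b + 2 by omega, lucas_add_two]
    simp [lucas]
  | a + 2, b => by
    rw [show a + 2 + b + 1 = (a + b + 1) + 2 by omega, lucas_add_two,
      show a + b + 1 + 1 = (a + 1) + b + 1 by omega, lucas_add_add_one (a + 1) b,
      lucas_add_add_one a b, lucas_add_two (a + 1), lucas_add_two a]
    ring

theorem exists_nonneg_lucas_mul_eq (m k : ℕ) :
    ∃ p : P2, Nonneg p ∧ lucas (m * k) = p * lucas m := by
  induction k with
  | zero => exact ⟨0, nonneg_zero, by simp [lucas]⟩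
  | succ k ih =>
    obtain ⟨p, hp, hmk⟩ := ih
    cases m with
    | zero => exact ⟨0, nonneg_zero, by simp [lucas]⟩
    | succ m =>
      refine ⟨lucas ((m + 1) * k + 1) + pt * p * lucas m,
        nonneg_add (nonneg_lucas _) (nonneg_mul (nonneg_mul (nonneg_X 1) hp) (nonneg_lucas m)), ?_⟩
      rw [Nat.mul_succ, ← add_assoc, lucas_add_add_one, hmk]
      ring

theorem eval_lucas_eq_yz {a : ℕ} (a1 : 1 < a) :
    ∀ n, eval ![(2 * a : ℤ), -1] (lucas n) = Pell.yz a1 n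
  | 0 => by simp [lucas, Pell.yz]
  | 1 => by simp [lucas, Pell.yz]
  | n + 2 => by
    rw [lucas_add_two, Pell.yz_succ_succ, map_add, map_mul, map_mul,
      eval_lucas_eq_yz a1 (n + 1), eval_lucas_eq_yz a1 n]
    simp [ps, pt]
    ring

theorem dvd_of_lucas_dvd_lucas {m n : ℕ} (h : lucas m ∣ lucas n) : m ∣ n := by
  have a1 : 1 < 2 := one_lt_two
  rw [← Pell.y_dvd_iff a1, ← Int.natCast_dvd_natCast]
  simpa only [eval_lucas_eq_yz a1, Pell.yz] using map_dvd (eval ![(2 * (2 : ℕ) : ℤ), -1]) h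

theorem hoggatt_long_general (m n : ℕ) :
    (m ∣ n ↔ lucas m ∣ lucas n) ∧
    (m ∣ n → ∃ p : P2, Nonneg p ∧ lucas n = p * lucas m) := by
  have quotient_nonneg : m ∣ n → ∃ p : P2, Nonneg p ∧ lucas n = p * lucas m := by
    rintro ⟨k, rfl⟩
    exact exists_nonneg_lucas_mul_eq m k
  refine ⟨⟨fun hmn => ?_, dvd_of_lucas_dvd_lucas⟩, quotient_nonneg⟩
  obtain ⟨p, -, hp⟩ := quotient_nonneg hmn
  exact ⟨p, by rw [hp, mul_comm]⟩

/-- Hoggatt–Long: for positive m, n: m ∣ n iff {m} ∣ {n} in ℤ[s,t],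
and in that case the quotient lies in ℕ[s,t]. -/
theorem hoggatt_long (m n : ℕ) (hm : 0 < m) (hn : 0 < n) :
    (m ∣ n ↔ lucas m ∣ lucas n) ∧
    (m ∣ n → ∃ p : P2, Nonneg p ∧ lucas n = p * lucas m) :=
  hoggatt_long_general m n
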